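/- arXiv:2210.00518 — 3 statements merged into one kernel-verified Lean document; each statement's English description precedes it below -/
import Mathlib

section
/- Let F : ℝ⁵ → ℝ and U : ℝ × ℝ → ℝ be infinitely differentiable, with U satisfying ∂U/∂t(t,x) = F(U(t,x), ∂U/∂x(t,x), ∂²U/∂x²(t,x), t, x) for all (t,x) ∈ ℝ × ℝ, and set g(x) = U(0,x). Define the first-order time approximation u₁(s,x) = g(x) + s·F(g(x), g'(x), g''(x), 0, x). Then for every x ∈ ℝ, the derivative at s = 0 of the function s ↦ F(u₁(s,x), ∂u₁/∂x(s,x), ∂²u₁/∂x²(s,x), s, x) equals the second derivative of t ↦ U(t,x) evaluated at t = 0, i.e., it equals ∂²U/∂t²(0,x). -/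
open Function

/-- partial derivative of a function on ℝ² along direction v -/
noncomputable def pd (v : ℝ × ℝ) (f : ℝ × ℝ → ℝ) : ℝ × ℝ → ℝ :=
  fun p => fderiv ℝ f p v

lemma pd_contDiff {f : ℝ × ℝ → ℝ} (hf : ContDiff ℝ (⊤ : ℕ∞) f) (v : ℝ × ℝ) :
    ContDiff ℝ (⊤ : ℕ∞) (pd v f) :=
  (hf.fderiv_right (by norm_cast)).clm_apply contDiff_const

lemma hasDerivAt_right {f : ℝ × ℝ → ℝ} (hf : ContDiff ℝ (⊤ : ℕ∞) f) (t x : ℝ) :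
    HasDerivAt (fun y => f (t, y)) (pd (0, 1) f (t, x)) x := by
  have h1 : HasFDerivAt f (fderiv ℝ f (t, x)) (t, x) :=
    (hf.differentiable (by norm_cast) (t, x)).hasFDerivAt
  have h2 : HasDerivAt (fun y : ℝ => ((t, y) : ℝ × ℝ)) ((0 : ℝ), (1 : ℝ)) x :=
    (hasDerivAt_const x t).prodMk (hasDerivAt_id x)
  exact h1.comp_hasDerivAt x h2

lemma hasDerivAt_left {f : ℝ × ℝ → ℝ} (hf : ContDiff ℝ (⊤ : ℕ∞) f) (t x : ℝ) :
    HasDerivAt (fun s => f (s, x)) (pd (1, 0) f (t, x)) t := by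
  have h1 : HasFDerivAt f (fderiv ℝ f (t, x)) (t, x) :=
    (hf.differentiable (by norm_cast) (t, x)).hasFDerivAt
  have h2 : HasDerivAt (fun s : ℝ => ((s, x) : ℝ × ℝ)) ((1 : ℝ), (0 : ℝ)) t :=
    (hasDerivAt_id t).prodMk (hasDerivAt_const t x)
  exact h1.comp_hasDerivAt t h2

lemma mixed_eq {f : ℝ × ℝ → ℝ} (hf : ContDiff ℝ (⊤ : ℕ∞) f) (q v w : ℝ × ℝ) :
    pd w (pd v f) q = fderiv ℝ (fderiv ℝ f) q w v := by
  have hdf : HasFDerivAt (fderiv ℝ f) (fderiv ℝ (fderiv ℝ f) q) q :=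
    (((hf.fderiv_right (m := ((⊤:ℕ∞) : WithTop ℕ∞)) (by norm_cast)).differentiable
      (by norm_cast)) q).hasFDerivAt
  have := ((ContinuousLinearMap.apply ℝ ℝ v).hasFDerivAt.comp q hdf).fderiv
  simp only [pd]
  calc fderiv ℝ (fun p => fderiv ℝ f p v) q w
      = fderiv ℝ ((ContinuousLinearMap.apply ℝ ℝ v) ∘ (fderiv ℝ f)) q w := rfl
    _ = fderiv ℝ (fderiv ℝ f) q w v := by rw [this]; rfl

lemma pd_comm {f : ℝ × ℝ → ℝ} (hf : ContDiff ℝ (⊤ : ℕ∞) f) (v w : ℝ × ℝ) :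
    pd w (pd v f) = pd v (pd w f) := by
  funext q
  rw [mixed_eq hf q v w, mixed_eq hf q w v]
  have hsymm : IsSymmSndFDerivAt ℝ f q :=
    hf.contDiffAt.isSymmSndFDerivAt (by rw [minSmoothness_of_isRCLikeNormedField]; exact (WithTop.coe_le_coe.mpr (le_top : (2 : ℕ∞) ≤ ⊤) : ((2 : ℕ∞) : WithTop ℕ∞) ≤ _))
  exact hsymm w v

lemma lin_hasDerivAt (a b : ℝ) : HasDerivAt (fun s : ℝ => a + s * b) b 0 := by
  simpa using ((hasDerivAt_id (0:ℝ)).mul_const b).const_add a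

/-- Let `U` be a smooth solution of `∂U/∂t = F(U, U_x, U_xx, t, x)` with smooth `F`, and set
`g(x) = U(0,x)` and `u₁(s,x) = g(x) + s·F(g(x), g'(x), g''(x), 0, x)`. Then the derivative at
`s = 0` of `s ↦ F(u₁(s,x), ∂u₁/∂x(s,x), ∂²u₁/∂x²(s,x), s, x)` equals `∂²U/∂t²(0,x)`. -/
theorem first_order_taylor_lie_derivative
    (F : ℝ → ℝ → ℝ → ℝ → ℝ → ℝ)
    (hF : ContDiff ℝ (⊤ : ℕ∞)
      (fun p : ℝ × ℝ × ℝ × ℝ × ℝ => F p.1 p.2.1 p.2.2.1 p.2.2.2.1 p.2.2.2.2))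
    (U : ℝ → ℝ → ℝ)
    (hU : ContDiff ℝ (⊤ : ℕ∞) (Function.uncurry U))
    (hPDE : ∀ t x, deriv (fun s => U s x) t =
        F (U t x) (deriv (fun y => U t y) x) (iteratedDeriv 2 (fun y => U t y) x) t x)
    (g : ℝ → ℝ) (hg : ∀ x, g x = U 0 x)
    (u₁ : ℝ → ℝ → ℝ)
    (hu₁ : ∀ s x, u₁ s x = g x + s * F (g x) (deriv g x) (iteratedDeriv 2 g x) 0 x) :
    ∀ x, deriv (fun s =>
        F (u₁ s x) (deriv (fun y => u₁ s y) x) (iteratedDeriv 2 (fun y => u₁ s y) x) s x) 0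
      = iteratedDeriv 2 (fun t => U t x) 0 := by
  intro x
  have hW : ContDiff ℝ (⊤ : ℕ∞) (Function.uncurry U) := hU
  set W := Function.uncurry U with hWdef
  -- abbreviations
  have hWx : ContDiff ℝ (⊤ : ℕ∞) (pd (0,1) W) := pd_contDiff hW _
  have hWxx : ContDiff ℝ (⊤ : ℕ∞) (pd (0,1) (pd (0,1) W)) := pd_contDiff hWx _
  have hT : ContDiff ℝ (⊤ : ℕ∞) (pd (1,0) W) := pd_contDiff hW _
  have hTx : ContDiff ℝ (⊤ : ℕ∞) (pd (0,1) (pd (1,0) W)) := pd_contDiff hT _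
  -- basic derivative identities
  have eU1 : ∀ t y, deriv (fun z => U t z) y = pd (0,1) W (t,y) :=
    fun t y => (hasDerivAt_right hW t y).deriv
  have eU2 : ∀ t y, iteratedDeriv 2 (fun z => U t z) y = pd (0,1) (pd (0,1) W) (t,y) := by
    intro t y
    rw [iteratedDeriv_succ, iteratedDeriv_one]
    have h1 : deriv (fun z => U t z) = fun z => pd (0,1) W (t,z) := funext (eU1 t)
    rw [h1]
    exact (hasDerivAt_right hWx t y).deriv
  have eT : ∀ t y, deriv (fun s => U s y) t = pd (1,0) W (t,y) :=
    fun t y => (hasDerivAt_left hW t y).deriv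
  -- g identities
  have eg0 : ∀ y, g y = W (0,y) := fun y => hg y
  have geq : g = fun y => W (0,y) := funext eg0
  have eg1 : ∀ y, deriv g y = pd (0,1) W (0,y) := by
    intro y; rw [geq]; exact (hasDerivAt_right hW 0 y).deriv
  have eg2 : ∀ y, iteratedDeriv 2 g y = pd (0,1) (pd (0,1) W) (0,y) := by
    intro y; rw [geq]
    rw [iteratedDeriv_succ, iteratedDeriv_one]
    have h1 : deriv (fun z => W (0,z)) = fun z => pd (0,1) W (0,z) :=
      funext (fun z => (hasDerivAt_right hW 0 z).deriv)
    rw [h1]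
    exact (hasDerivAt_right hWx 0 y).deriv
  -- PDE in pd form
  have hPDE' : ∀ t y, pd (1,0) W (t,y)
      = F (W (t,y)) (pd (0,1) W (t,y)) (pd (0,1) (pd (0,1) W) (t,y)) t y := by
    intro t y
    rw [← eT t y, hPDE t y, eU1 t y, eU2 t y]; rfl
  -- the coefficient in u₁ equals ∂U/∂t(0,·)
  have hA : ∀ y, F (g y) (deriv g y) (iteratedDeriv 2 g y) 0 y = pd (1,0) W (0,y) := by
    intro y
    rw [eg0 y, eg1 y, eg2 y]
    exact (hPDE' 0 y).symm
  -- u₁ slices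
  have hu₁' : ∀ s, (fun y => u₁ s y) = fun y => W (0,y) + s * pd (1,0) W (0,y) := by
    intro s; funext y; rw [hu₁ s y, hA y, eg0 y]
  have hu1x : ∀ s y, deriv (fun z => u₁ s z) y
      = pd (0,1) W (0,y) + s * pd (0,1) (pd (1,0) W) (0,y) := by
    intro s y
    rw [hu₁' s]
    exact ((hasDerivAt_right hW 0 y).add ((hasDerivAt_right hT 0 y).const_mul s)).deriv
  have hu1xx : ∀ s y, iteratedDeriv 2 (fun z => u₁ s z) y
      = pd (0,1) (pd (0,1) W) (0,y) + s * pd (0,1) (pd (0,1) (pd (1,0) W)) (0,y) := by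
    intro s y
    rw [iteratedDeriv_succ, iteratedDeriv_one]
    have h1 : deriv (fun z => u₁ s z)
        = fun z => pd (0,1) W (0,z) + s * pd (0,1) (pd (1,0) W) (0,z) :=
      funext (hu1x s)
    rw [h1]
    exact ((hasDerivAt_right hWx 0 y).add ((hasDerivAt_right hTx 0 y).const_mul s)).deriv
  -- uncurried F and base point / velocity
  set F5 : ℝ × ℝ × ℝ × ℝ × ℝ → ℝ :=
    fun p => F p.1 p.2.1 p.2.2.1 p.2.2.2.1 p.2.2.2.2 with hF5def
  set p₀ : ℝ × ℝ × ℝ × ℝ × ℝ :=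
    (W (0,x), pd (0,1) W (0,x), pd (0,1) (pd (0,1) W) (0,x), 0, x) with hp₀def
  set v : ℝ × ℝ × ℝ × ℝ × ℝ :=
    (pd (1,0) W (0,x), pd (0,1) (pd (1,0) W) (0,x),
      pd (0,1) (pd (0,1) (pd (1,0) W)) (0,x), 1, 0) with hvdef
  -- curve 1 : the u₁-approximation curve
  set c₁ : ℝ → ℝ × ℝ × ℝ × ℝ × ℝ := fun s =>
    (W (0,x) + s * pd (1,0) W (0,x),
     pd (0,1) W (0,x) + s * pd (0,1) (pd (1,0) W) (0,x),
     pd (0,1) (pd (0,1) W) (0,x) + s * pd (0,1) (pd (0,1) (pd (1,0) W)) (0,x),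
     s, x) with hc₁def
  have hc₁ : HasDerivAt c₁ v 0 :=
    (lin_hasDerivAt _ _).prodMk ((lin_hasDerivAt _ _).prodMk ((lin_hasDerivAt _ _).prodMk
      ((hasDerivAt_id 0).prodMk (hasDerivAt_const 0 x))))
  have hc10 : c₁ 0 = p₀ := by simp [hc₁def, hp₀def]
  have hF5d : HasFDerivAt F5 (fderiv ℝ F5 p₀) (c₁ 0) := by
    rw [hc10]; exact (hF.differentiable (by norm_cast) p₀).hasFDerivAt
  -- LHS computation
  have hfun1 : (fun s =>
      F (u₁ s x) (deriv (fun y => u₁ s y) x) (iteratedDeriv 2 (fun y => u₁ s y) x) s x)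
      = fun s => F5 (c₁ s) := by
    funext s
    rw [hu₁ s x, hA x, eg0 x, hu1x s x, hu1xx s x]
  have key1 : deriv (fun s =>
      F (u₁ s x) (deriv (fun y => u₁ s y) x) (iteratedDeriv 2 (fun y => u₁ s y) x) s x) 0
      = fderiv ℝ F5 p₀ v := by
    rw [hfun1]
    exact (hF5d.comp_hasDerivAt 0 hc₁).deriv
  -- curve 2 : the exact solution curve
  set c₂ : ℝ → ℝ × ℝ × ℝ × ℝ × ℝ := fun s =>
    (W (s,x), pd (0,1) W (s,x), pd (0,1) (pd (0,1) W) (s,x), s, x) with hc₂def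
  have comm1 : pd (1,0) (pd (0,1) W) = pd (0,1) (pd (1,0) W) := pd_comm hW _ _
  have comm2 : pd (1,0) (pd (0,1) (pd (0,1) W))
      = pd (0,1) (pd (0,1) (pd (1,0) W)) := by
    rw [pd_comm hWx (0,1) (1,0), comm1]
  have hc₂ : HasDerivAt c₂ v 0 := by
    have h1 : HasDerivAt (fun s => W (s,x)) (pd (1,0) W (0,x)) 0 := hasDerivAt_left hW 0 x
    have h2 : HasDerivAt (fun s => pd (0,1) W (s,x)) (pd (0,1) (pd (1,0) W) (0,x)) 0 := by
      have := hasDerivAt_left hWx 0 x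
      rwa [comm1] at this
    have h3 : HasDerivAt (fun s => pd (0,1) (pd (0,1) W) (s,x))
        (pd (0,1) (pd (0,1) (pd (1,0) W)) (0,x)) 0 := by
      have := hasDerivAt_left hWxx 0 x
      rwa [comm2] at this
    exact h1.prodMk (h2.prodMk (h3.prodMk ((hasDerivAt_id 0).prodMk (hasDerivAt_const 0 x))))
  have hc20 : c₂ 0 = p₀ := rfl
  have hF5d' : HasFDerivAt F5 (fderiv ℝ F5 p₀) (c₂ 0) := by
    rw [hc20]; exact (hF.differentiable (by norm_cast) p₀).hasFDerivAt
  have hfun2 : (fun s => pd (1,0) W (s,x)) = fun s => F5 (c₂ s) := by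
    funext s; exact hPDE' s x
  have key2 : deriv (fun s => pd (1,0) W (s,x)) 0 = fderiv ℝ F5 p₀ v := by
    rw [hfun2]
    exact (hF5d'.comp_hasDerivAt 0 hc₂).deriv
  -- RHS identification
  have hRHS : iteratedDeriv 2 (fun t => U t x) 0 = deriv (fun s => pd (1,0) W (s,x)) 0 := by
    rw [iteratedDeriv_succ, iteratedDeriv_one]
    have h1 : deriv (fun t => U t x) = fun t => pd (1,0) W (t,x) :=
      funext (fun t => eT t x)
    rw [h1]
  rw [key1, hRHS, key2]
end

section
/- Let F : ℝ⁵ → ℝ and U : ℝ × ℝ → ℝ be infinitely differentiable, with U satisfying ∂U/∂t(t,x) = F(U(t,x), ∂U/∂x(t,x), ∂²U/∂x²(t,x), t, x) for all (t,x) ∈ ℝ × ℝ. For m ≥ 1, define the time-Taylor polynomial P(s,x) = Σ_{i=0}^{m-1} (s^i / i!) · d_i(x), where d_i(x) is the i-th derivative of t ↦ U(t,x) at t = 0. Then for every x ∈ ℝ, the (m-1)-th iterated derivative at s = 0 of the function s ↦ F(P(s,x), ∂P/∂x(s,x), ∂²P/∂x²(s,x), s, x) equals the m-th derivative of t ↦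 U(t,x) at t = 0, i.e., it equals d_m(x). -/
open Function

noncomputable def pdt (W : ℝ → ℝ → ℝ) : ℝ → ℝ → ℝ := fun t x => deriv (fun s => W s x) t
noncomputable def pdx (W : ℝ → ℝ → ℝ) : ℝ → ℝ → ℝ := fun t x => deriv (fun y => W t y) x

lemma pdt_eq {W : ℝ → ℝ → ℝ} (h : ContDiff ℝ (⊤:ℕ∞) (uncurry W)) (t x : ℝ) :
    pdt W t x = fderiv ℝ (uncurry W) (t, x) (1, 0) := by
  have h1 : HasDerivAt (fun s : ℝ => (s, x)) ((1:ℝ), (0:ℝ)) t :=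
    (hasDerivAt_id t).prodMk (hasDerivAt_const t x)
  exact (((h.differentiable (by simp)) (t, x)).hasFDerivAt.comp_hasDerivAt t h1).deriv

lemma pdx_eq {W : ℝ → ℝ → ℝ} (h : ContDiff ℝ (⊤:ℕ∞) (uncurry W)) (t x : ℝ) :
    pdx W t x = fderiv ℝ (uncurry W) (t, x) (0, 1) := by
  have h1 : HasDerivAt (fun y : ℝ => (t, y)) ((0:ℝ), (1:ℝ)) x :=
    (hasDerivAt_const x t).prodMk (hasDerivAt_id x)
  exact (((h.differentiable (by simp)) (t, x)).hasFDerivAt.comp_hasDerivAt x h1).deriv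

lemma le_add_one_top : ((⊤:ℕ∞) : WithTop ℕ∞) + 1 ≤ ((⊤:ℕ∞) : WithTop ℕ∞) := by simp

lemma pdt_smooth {W : ℝ → ℝ → ℝ} (h : ContDiff ℝ (⊤:ℕ∞) (uncurry W)) :
    ContDiff ℝ (⊤:ℕ∞) (uncurry (pdt W)) := by
  have e : uncurry (pdt W) = fun p : ℝ × ℝ => fderiv ℝ (uncurry W) p ((1:ℝ), (0:ℝ)) :=
    funext fun p => pdt_eq h p.1 p.2
  rw [e]
  exact (h.fderiv_right le_add_one_top).clm_apply contDiff_const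

lemma pdx_smooth {W : ℝ → ℝ → ℝ} (h : ContDiff ℝ (⊤:ℕ∞) (uncurry W)) :
    ContDiff ℝ (⊤:ℕ∞) (uncurry (pdx W)) := by
  have e : uncurry (pdx W) = fun p : ℝ × ℝ => fderiv ℝ (uncurry W) p ((0:ℝ), (1:ℝ)) :=
    funext fun p => pdx_eq h p.1 p.2
  rw [e]
  exact (h.fderiv_right le_add_one_top).clm_apply contDiff_const

/-- Clairaut for curried smooth functions. -/
lemma pd_comm_s15 {W : ℝ → ℝ → ℝ} (h : ContDiff ℝ (⊤:ℕ∞) (uncurry W)) :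
    pdx (pdt W) = pdt (pdx W) := by
  funext t x
  have hg : ContDiff ℝ (⊤:ℕ∞) (fderiv ℝ (uncurry W)) := h.fderiv_right le_add_one_top
  have hgd := hg.differentiable (by simp)
  -- LHS
  have cx : HasDerivAt (fun y : ℝ => (t, y)) ((0:ℝ), (1:ℝ)) x :=
    (hasDerivAt_const x t).prodMk (hasDerivAt_id x)
  have hl : HasDerivAt (fun y => fderiv ℝ (uncurry W) (t, y))
      (fderiv ℝ (fderiv ℝ (uncurry W)) (t, x) (0, 1)) x :=
    (hgd (t, x)).hasFDerivAt.comp_hasDerivAt x cx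
  have hl2 : HasDerivAt (fun y => fderiv ℝ (uncurry W) (t, y) ((1:ℝ), (0:ℝ)))
      (fderiv ℝ (fderiv ℝ (uncurry W)) (t, x) (0, 1) (1, 0)) x := by
    have := hl.clm_apply (hasDerivAt_const x ((1:ℝ), (0:ℝ)))
    simpa using this
  have eL : pdx (pdt W) t x = fderiv ℝ (fderiv ℝ (uncurry W)) (t, x) (0, 1) (1, 0) := by
    have : (fun y => pdt W t y) = fun y => fderiv ℝ (uncurry W) (t, y) ((1:ℝ), (0:ℝ)) :=
      funext fun y => pdt_eq h t y
    rw [pdx, this]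
    exact hl2.deriv
  -- RHS
  have ct : HasDerivAt (fun s : ℝ => (s, x)) ((1:ℝ), (0:ℝ)) t :=
    (hasDerivAt_id t).prodMk (hasDerivAt_const t x)
  have hr : HasDerivAt (fun s => fderiv ℝ (uncurry W) (s, x))
      (fderiv ℝ (fderiv ℝ (uncurry W)) (t, x) (1, 0)) t :=
    (hgd (t, x)).hasFDerivAt.comp_hasDerivAt t ct
  have hr2 : HasDerivAt (fun s => fderiv ℝ (uncurry W) (s, x) ((0:ℝ), (1:ℝ)))
      (fderiv ℝ (fderiv ℝ (uncurry W)) (t, x) (1, 0) (0, 1)) t := by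
    have := hr.clm_apply (hasDerivAt_const t ((0:ℝ), (1:ℝ)))
    simpa using this
  have eR : pdt (pdx W) t x = fderiv ℝ (fderiv ℝ (uncurry W)) (t, x) (1, 0) (0, 1) := by
    have : (fun s => pdx W s x) = fun s => fderiv ℝ (uncurry W) (s, x) ((0:ℝ), (1:ℝ)) :=
      funext fun s => pdx_eq h s x
    rw [pdt, this]
    exact hr2.deriv
  rw [eL, eR]
  exact (h.contDiffAt.isSymmSndFDerivAt (by
    rw [show ((2:WithTop ℕ∞)) = ((2:ℕ∞) : WithTop ℕ∞) by rfl]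
    exact le_trans (le_of_eq minSmoothness_of_isRCLikeNormedField) (WithTop.coe_le_coe.mpr le_top))) _ _

lemma pdt_iter_smooth {W : ℝ → ℝ → ℝ} (h : ContDiff ℝ (⊤:ℕ∞) (uncurry W)) (i : ℕ) :
    ContDiff ℝ (⊤:ℕ∞) (uncurry (pdt^[i] W)) := by
  induction i generalizing W with
  | zero => exact h
  | succ i ih =>
    rw [Function.iterate_succ_apply]
    exact ih (pdt_smooth h)

lemma pdx_pdt_iter {W : ℝ → ℝ → ℝ} (h : ContDiff ℝ (⊤:ℕ∞) (uncurry W)) (i : ℕ) :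
    pdx (pdt^[i] W) = pdt^[i] (pdx W) := by
  induction i generalizing W with
  | zero => rfl
  | succ i ih =>
    rw [Function.iterate_succ_apply, ih (pdt_smooth h), pd_comm_s15 h,
      Function.iterate_succ_apply]

lemma iteratedDeriv_slice_t (W : ℝ → ℝ → ℝ) (i : ℕ) (x : ℝ) :
    iteratedDeriv i (fun t => W t x) = fun τ => (pdt^[i] W) τ x := by
  induction i generalizing W with
  | zero => rfl
  | succ i ih =>
    rw [iteratedDeriv_succ']
    have : deriv (fun t => W t x) = fun t => (pdt W) t x := rfl
    rw [this, ih (pdt W), Function.iterate_succ_apply]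

lemma iteratedDeriv_slice_x (W : ℝ → ℝ → ℝ) (j : ℕ) (t : ℝ) :
    iteratedDeriv j (fun y => W t y) = fun x => (pdx^[j] W) t x := by
  induction j generalizing W with
  | zero => rfl
  | succ j ih =>
    rw [iteratedDeriv_succ']
    have : deriv (fun y => W t y) = fun y => (pdx W) t y := rfl
    rw [this, ih (pdx W), Function.iterate_succ_apply]


lemma iteratedDeriv_prod {E G : Type*} [NormedAddCommGroup E] [NormedSpace ℝ E]
    [NormedAddCommGroup G] [NormedSpace ℝ G] {f : ℝ → E} {g : ℝ → G}
    (hf : ContDiff ℝ (⊤:ℕ∞) f) (hg : ContDiff ℝ (⊤:ℕ∞) g) (n : ℕ) :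
    iteratedDeriv n (fun s => (f s, g s)) = fun s => (iteratedDeriv n f s, iteratedDeriv n g s) := by
  induction n generalizing f g with
  | zero => rfl
  | succ n ih =>
    rw [iteratedDeriv_succ', iteratedDeriv_succ' (f := f), iteratedDeriv_succ' (f := g)]
    have e : deriv (fun s => (f s, g s)) = fun s => (deriv f s, deriv g s) := by
      funext s
      exact (((hf.differentiable (by simp)) s).hasDerivAt.prodMk
        ((hg.differentiable (by simp)) s).hasDerivAt).deriv
    rw [e]
    exact ih (contDiff_infty_iff_deriv.mp hf).2 (contDiff_infty_iff_deriv.mp hg).2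

lemma jetComp : ∀ (n : ℕ) {E : Type} [NormedAddCommGroup E] [NormedSpace ℝ E]
    (Φ : E → ℝ) (c₁ c₂ : ℝ → E), ContDiff ℝ (⊤:ℕ∞) Φ → ContDiff ℝ (⊤:ℕ∞) c₁ →
    ContDiff ℝ (⊤:ℕ∞) c₂ →
    (∀ k ≤ n, iteratedDeriv k c₁ 0 = iteratedDeriv k c₂ 0) →
    ∀ k ≤ n, iteratedDeriv k (fun s => Φ (c₁ s)) 0 = iteratedDeriv k (fun s => Φ (c₂ s)) 0 := by
  intro n
  induction n with
  | zero =>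
    intro E _ _ Φ c₁ c₂ hΦ h₁ h₂ hjet k hk
    obtain rfl : k = 0 := Nat.le_zero.mp hk
    simp only [iteratedDeriv_zero]
    have := hjet 0 le_rfl
    simp only [iteratedDeriv_zero] at this
    rw [this]
  | succ n ih =>
    intro E _ _ Φ c₁ c₂ hΦ h₁ h₂ hjet k hk
    match k with
    | 0 =>
      simp only [iteratedDeriv_zero]
      have := hjet 0 (Nat.zero_le _)
      simp only [iteratedDeriv_zero] at this
      rw [this]
    | (j+1) =>
      rw [iteratedDeriv_succ', iteratedDeriv_succ']
      set Ψ : E × E → ℝ := fun p => fderiv ℝ Φ p.1 p.2 with hΨdef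
      have hdiffΦ := hΦ.differentiable (by simp)
      have e₁ : deriv (fun s => Φ (c₁ s)) = fun s => Ψ (c₁ s, deriv c₁ s) := by
        funext s
        exact ((hdiffΦ (c₁ s)).hasFDerivAt.comp_hasDerivAt s
          ((h₁.differentiable (by simp) s).hasDerivAt)).deriv
      have e₂ : deriv (fun s => Φ (c₂ s)) = fun s => Ψ (c₂ s, deriv c₂ s) := by
        funext s
        exact ((hdiffΦ (c₂ s)).hasFDerivAt.comp_hasDerivAt s
          ((h₂.differentiable (by simp) s).hasDerivAt)).deriv
      rw [e₁, e₂]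
      have hΨ : ContDiff ℝ (⊤:ℕ∞) Ψ :=
        ((hΦ.fderiv_right le_add_one_top).comp contDiff_fst).clm_apply contDiff_snd
      have hd₁ := (contDiff_infty_iff_deriv.mp h₁).2
      have hd₂ := (contDiff_infty_iff_deriv.mp h₂).2
      have hγ₁ : ContDiff ℝ (⊤:ℕ∞) (fun s => (c₁ s, deriv c₁ s)) := h₁.prodMk hd₁
      have hγ₂ : ContDiff ℝ (⊤:ℕ∞) (fun s => (c₂ s, deriv c₂ s)) := h₂.prodMk hd₂
      have hjet' : ∀ k ≤ n, iteratedDeriv k (fun s => (c₁ s, deriv c₁ s)) 0 =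
          iteratedDeriv k (fun s => (c₂ s, deriv c₂ s)) 0 := by
        intro k hk'
        rw [iteratedDeriv_prod h₁ hd₁, iteratedDeriv_prod h₂ hd₂]
        have a1 := hjet k (le_trans hk' (Nat.le_succ n))
        have a2 : iteratedDeriv k (deriv c₁) 0 = iteratedDeriv k (deriv c₂) 0 := by
          rw [← iteratedDeriv_succ', ← iteratedDeriv_succ']
          exact hjet (k+1) (Nat.succ_le_succ hk')
        simp [a1, a2]
      exact ih Ψ _ _ hΨ hγ₁ hγ₂ hjet' j (Nat.succ_le_succ_iff.mp hk)

lemma monomial_smooth (i : ℕ) (a : ℝ) :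
    ContDiff ℝ (⊤:ℕ∞) (fun s : ℝ => s ^ i / (Nat.factorial i : ℝ) * a) :=
  (((contDiff_id.pow i).div_const _).mul contDiff_const)

lemma iter_monomial (k : ℕ) : ∀ (i : ℕ) (a : ℝ),
    iteratedDeriv k (fun s : ℝ => s ^ i / (Nat.factorial i : ℝ) * a) 0 =
      if k = i then a else 0 := by
  induction k with
  | zero =>
    intro i a
    simp only [iteratedDeriv_zero]
    cases i with
    | zero => simp
    | succ j => simp [Nat.succ_ne_zero, zero_pow]
  | succ k ih =>
    intro i a
    rw [iteratedDeriv_succ']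
    cases i with
    | zero =>
      have : deriv (fun s : ℝ => s ^ 0 / (Nat.factorial 0 : ℝ) * a) = fun _ : ℝ => (0:ℝ) := by
        funext s
        simp
      rw [this]
      have h0 : iteratedDeriv k (fun _ : ℝ => (0:ℝ)) 0 = 0 := by
        have : (fun _ : ℝ => (0:ℝ)) = fun s : ℝ => s ^ 0 / (Nat.factorial 0 : ℝ) * 0 := by
          funext s; simp
        rw [this, ih 0 0]
        simp
      rw [h0]
      simp
    | succ j =>
      have hderiv : deriv (fun s : ℝ => s ^ (j+1) / (Nat.factorial (j+1) : ℝ) * a) =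
          fun s : ℝ => s ^ j / (Nat.factorial j : ℝ) * a := by
        funext s
        have e : (fun s : ℝ => s ^ (j+1) / (Nat.factorial (j+1) : ℝ) * a) =
            fun s : ℝ => (a / (Nat.factorial (j+1) : ℝ)) * s ^ (j+1) := by
          funext s; ring
        rw [e, deriv_const_mul _ (differentiableAt_pow _), deriv_pow_field]
        have hfac : (Nat.factorial (j+1) : ℝ) = (j+1 : ℝ) * (Nat.factorial j : ℝ) := by
          rw [Nat.factorial_succ]; push_cast; ring
        have hj1 : ((j:ℝ)+1) ≠ 0 := by positivity
        have hfj : (Nat.factorial j : ℝ) ≠ 0 := Nat.cast_ne_zero.mpr (Nat.factorial_ne_zero j)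
        field_simp [hfac]
        simp only [Nat.add_sub_cancel, Nat.factorial_succ, Nat.cast_mul, Nat.cast_add, Nat.cast_one]
        ring
      rw [hderiv, ih j a]
      simp only [Nat.succ_eq_add_one, add_left_inj]

lemma iter_poly (m : ℕ) (a : ℕ → ℝ) (k : ℕ) (hk : k < m) :
    iteratedDeriv k (fun s : ℝ => ∑ i ∈ Finset.range m, s ^ i / (Nat.factorial i : ℝ) * a i) 0
      = a k := by
  have hsum : iteratedFDeriv ℝ k
        (fun s : ℝ => ∑ i ∈ Finset.range m, s ^ i / (Nat.factorial i : ℝ) * a i)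
      = ∑ i ∈ Finset.range m,
        iteratedFDeriv ℝ k (fun s : ℝ => s ^ i / (Nat.factorial i : ℝ) * a i) :=
    iteratedFDeriv_sum (fun j _ => (monomial_smooth j (a j)).of_le
      (by exact_mod_cast le_top))
  rw [iteratedDeriv_eq_iteratedFDeriv, hsum]
  simp only [Finset.sum_apply, ContinuousMultilinearMap.sum_apply]
  have h1 : ∀ i ∈ Finset.range m,
      (iteratedFDeriv ℝ k (fun s : ℝ => s ^ i / (Nat.factorial i : ℝ) * a i) 0 :
        (Fin k → ℝ) → ℝ) (fun _ => 1) = if k = i then a i else 0 := by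
    intro i _
    rw [← iteratedDeriv_eq_iteratedFDeriv, iter_monomial]
  rw [Finset.sum_congr rfl h1, Finset.sum_ite_eq (Finset.range m) k a]
  simp [Finset.mem_range.mpr hk]

lemma iteratedDeriv_prod5 {f1 f2 f3 f4 f5 : ℝ → ℝ}
    (h1 : ContDiff ℝ (⊤:ℕ∞) f1) (h2 : ContDiff ℝ (⊤:ℕ∞) f2) (h3 : ContDiff ℝ (⊤:ℕ∞) f3)
    (h4 : ContDiff ℝ (⊤:ℕ∞) f4) (h5 : ContDiff ℝ (⊤:ℕ∞) f5) (k : ℕ) (t : ℝ) :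
    iteratedDeriv k (fun s => (f1 s, f2 s, f3 s, f4 s, f5 s)) t =
      (iteratedDeriv k f1 t, iteratedDeriv k f2 t, iteratedDeriv k f3 t,
        iteratedDeriv k f4 t, iteratedDeriv k f5 t) := by
  have h45 : ContDiff ℝ (⊤:ℕ∞) (fun s => (f4 s, f5 s)) := h4.prodMk h5
  have h345 : ContDiff ℝ (⊤:ℕ∞) (fun s => (f3 s, f4 s, f5 s)) := h3.prodMk h45
  have h2345 : ContDiff ℝ (⊤:ℕ∞) (fun s => (f2 s, f3 s, f4 s, f5 s)) := h2.prodMk h345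
  rw [iteratedDeriv_prod h1 h2345, iteratedDeriv_prod h2 h345, iteratedDeriv_prod h3 h45,
    iteratedDeriv_prod h4 h5]

lemma deriv_sum_slice (W : ℝ → ℝ → ℝ) (hW : ContDiff ℝ (⊤:ℕ∞) (uncurry W))
    (c : ℕ → ℝ) (m : ℕ) :
    deriv (fun y => ∑ i ∈ Finset.range m, c i * (pdt^[i] W 0 y)) =
      fun y => ∑ i ∈ Finset.range m, c i * (pdt^[i] (pdx W) 0 y) := by
  funext y
  have hdi : ∀ i : ℕ, DifferentiableAt ℝ (fun z => pdt^[i] W 0 z) y := by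
    intro i
    exact (((pdt_iter_smooth hW i).comp
      ((contDiff_const.prodMk contDiff_id) : ContDiff ℝ (⊤:ℕ∞) (fun z : ℝ => ((0:ℝ), z)))
      ).differentiable (by simp)) y
  rw [deriv_fun_sum (fun i _ => (hdi i).const_mul (c i))]
  refine Finset.sum_congr rfl fun i _ => ?_
  rw [deriv_const_mul _ (hdi i)]
  congr 1
  have : deriv (fun z => pdt^[i] W 0 z) y = pdx (pdt^[i] W) 0 y := rfl
  rw [this, pdx_pdt_iter hW i]


/-- Let `U` be a smooth solution of `∂U/∂t = F(U, U_x, U_xx, t, x)` with smooth `F`, and for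
`m ≥ 1` let `P(s,x) = Σ_{i<m} (s^i/i!)·d_i(x)` be the order-(m-1) time-Taylor polynomial of
`U` at `t = 0`, where `d_i(x)` is the i-th time derivative of `U` at `(0,x)`. Then the
(m-1)-th derivative at `s = 0` of `s ↦ F(P(s,x), ∂P/∂x(s,x), ∂²P/∂x²(s,x), s, x)` equals the
m-th time derivative `d_m(x)`. -/
theorem taylor_substitution_lie_derivative
    (F : ℝ → ℝ → ℝ → ℝ → ℝ → ℝ)
    (hF : ContDiff ℝ (⊤ : ℕ∞)
      (fun p : ℝ × ℝ × ℝ × ℝ × ℝ => F p.1 p.2.1 p.2.2.1 p.2.2.2.1 p.2.2.2.2))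
    (U : ℝ → ℝ → ℝ)
    (hU : ContDiff ℝ (⊤ : ℕ∞) (Function.uncurry U))
    (hPDE : ∀ t x, deriv (fun s => U s x) t =
        F (U t x) (deriv (fun y => U t y) x) (iteratedDeriv 2 (fun y => U t y) x) t x)
    (m : ℕ) (hm : 1 ≤ m)
    (P : ℝ → ℝ → ℝ)
    (hP : ∀ s x, P s x = ∑ i ∈ Finset.range m,
        (s^i / (Nat.factorial i)) * iteratedDeriv i (fun t => U t x) 0) :
    ∀ x, iteratedDeriv (m - 1) (fun s =>
        F (P s x) (deriv (fun y => P s y) x) (iteratedDeriv 2 (fun y => P s y) x) s x) 0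
      = iteratedDeriv m (fun t => U t x) 0 := by
  intro x
  obtain ⟨n, rfl⟩ : ∃ n, m = n + 1 := ⟨m - 1, (Nat.succ_pred_eq_of_pos hm).symm⟩
  simp only [Nat.add_sub_cancel]
  set SU := pdx U with hSUdef
  set SSU := pdx (pdx U) with hSSUdef
  have hSUsm : ContDiff ℝ (⊤:ℕ∞) (uncurry SU) := pdx_smooth hU
  have hSSUsm : ContDiff ℝ (⊤:ℕ∞) (uncurry SSU) := pdx_smooth hSUsm
  -- rewrite P in terms of pdt iterates
  have hPg : ∀ s y, P s y = ∑ i ∈ Finset.range (n+1),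
      (s ^ i / (Nat.factorial i : ℝ)) * (pdt^[i] U 0 y) := by
    intro s y
    rw [hP]
    refine Finset.sum_congr rfl fun i _ => ?_
    rw [congrFun (iteratedDeriv_slice_t U i y) 0]
  -- first x-derivative of P
  have hderiv1 : ∀ s, deriv (fun y => P s y) =
      fun y => ∑ i ∈ Finset.range (n+1), (s ^ i / (Nat.factorial i : ℝ)) * (pdt^[i] SU 0 y) := by
    intro s
    have e : (fun y => P s y) = fun y => ∑ i ∈ Finset.range (n+1),
        (s ^ i / (Nat.factorial i : ℝ)) * (pdt^[i] U 0 y) := funext (hPg s)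
    rw [e, deriv_sum_slice U hU _ _]
  -- second x-derivative of P
  have hderiv2 : ∀ s, deriv (deriv (fun y => P s y)) =
      fun y => ∑ i ∈ Finset.range (n+1), (s ^ i / (Nat.factorial i : ℝ)) * (pdt^[i] SSU 0 y) := by
    intro s
    rw [hderiv1 s, deriv_sum_slice SU hSUsm _ _]
  have hit2 : ∀ g : ℝ → ℝ, iteratedDeriv 2 g = deriv (deriv g) := by
    intro g
    rw [iteratedDeriv_succ, iteratedDeriv_one]
  -- abbreviations for coefficients
  set A : ℕ → ℝ := fun i => pdt^[i] U 0 x with hA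
  set B : ℕ → ℝ := fun i => pdt^[i] SU 0 x with hB
  set C : ℕ → ℝ := fun i => pdt^[i] SSU 0 x with hC
  set Φ : ℝ × ℝ × ℝ × ℝ × ℝ → ℝ :=
    (fun p : ℝ × ℝ × ℝ × ℝ × ℝ => F p.1 p.2.1 p.2.2.1 p.2.2.2.1 p.2.2.2.2) with hΦ
  set c₁ : ℝ → ℝ × ℝ × ℝ × ℝ × ℝ := fun s =>
    (∑ i ∈ Finset.range (n+1), (s ^ i / (Nat.factorial i : ℝ)) * A i,
     ∑ i ∈ Finset.range (n+1), (s ^ i / (Nat.factorial i : ℝ)) * B i,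
     ∑ i ∈ Finset.range (n+1), (s ^ i / (Nat.factorial i : ℝ)) * C i, s, x) with hc₁def
  set c₂ : ℝ → ℝ × ℝ × ℝ × ℝ × ℝ := fun s => (U s x, SU s x, SSU s x, s, x) with hc₂def
  -- LHS function is Φ ∘ c₁
  have eLHS : (fun s => F (P s x) (deriv (fun y => P s y) x)
      (iteratedDeriv 2 (fun y => P s y) x) s x) = fun s => Φ (c₁ s) := by
    funext s
    simp only [hΦ, hc₁def]
    rw [hPg s x, congrFun (hderiv1 s) x, hit2, congrFun (hderiv2 s) x]
  -- RHS function
  have eRHS : deriv (fun t => U t x) = fun s => Φ (c₂ s) := by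
    funext t
    rw [hPDE t x]
    simp only [hΦ, hc₂def]
    congr 1
    rw [hit2]
    rfl
  rw [eLHS, iteratedDeriv_succ', eRHS]
  -- smoothness of components
  have hpoly : ∀ a : ℕ → ℝ, ContDiff ℝ (⊤:ℕ∞)
      (fun s : ℝ => ∑ i ∈ Finset.range (n+1), (s ^ i / (Nat.factorial i : ℝ)) * a i) :=
    fun a => ContDiff.sum fun i _ => monomial_smooth i (a i)
  have hsliceT : ∀ (W : ℝ → ℝ → ℝ), ContDiff ℝ (⊤:ℕ∞) (uncurry W) →
      ContDiff ℝ (⊤:ℕ∞) (fun s => W s x) := fun W hW =>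
    hW.comp ((contDiff_id.prodMk contDiff_const) : ContDiff ℝ (⊤:ℕ∞) (fun s : ℝ => (s, x)))
  have hc₁ : ContDiff ℝ (⊤:ℕ∞) c₁ :=
    (hpoly A).prodMk ((hpoly B).prodMk ((hpoly C).prodMk (contDiff_id.prodMk contDiff_const)))
  have hc₂ : ContDiff ℝ (⊤:ℕ∞) c₂ :=
    (hsliceT U hU).prodMk ((hsliceT SU hSUsm).prodMk ((hsliceT SSU hSSUsm).prodMk
      (contDiff_id.prodMk contDiff_const)))
  -- matching jets
  have hjets : ∀ k ≤ n, iteratedDeriv k c₁ 0 = iteratedDeriv k c₂ 0 := by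
    intro k hk
    have e₁ := iteratedDeriv_prod5 (f4 := fun s => s) (f5 := fun _ => x)
      (hpoly A) (hpoly B) (hpoly C) contDiff_id contDiff_const k 0
    have e₂ := iteratedDeriv_prod5 (f4 := fun s => s) (f5 := fun _ => x)
      (hsliceT U hU) (hsliceT SU hSUsm) (hsliceT SSU hSSUsm) contDiff_id contDiff_const k 0
    rw [hc₁def, hc₂def, e₁, e₂]
    have hkm : k < n + 1 := Nat.lt_succ_of_le hk
    congr 1
    · rw [iter_poly (n+1) A k hkm, congrFun (iteratedDeriv_slice_t U k x) 0]
    congr 1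
    · rw [iter_poly (n+1) B k hkm, congrFun (iteratedDeriv_slice_t SU k x) 0]
    congr 1
    rw [iter_poly (n+1) C k hkm, congrFun (iteratedDeriv_slice_t SSU k x) 0]
  exact jetComp n Φ c₁ c₂ hF hc₁ hc₂ hjets n le_rfl
end

section
/- Let m and d be natural numbers, let f, g : ℝ → ℝ^d be m-times continuously differentiable functions whose iterated derivatives at 0 agree up to order m (i.e., for every i ≤ m the i-th iterated derivative of f at 0 equals the i-th iterated derivative of g at 0), and let Φ : ℝ^d → ℝ be m-times continuously differentiable. Then for every i ≤ m, the i-th iterated derivative of the composition Φ ∘ f at 0 equals the i-th iterated derivative of Φ ∘ g at 0. -/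
open Set

private lemma multilinear_eq_of_apply_one {n : ℕ} {E : Type*} [NormedAddCommGroup E]
    [NormedSpace ℝ E]
    {M N : ContinuousMultilinearMap ℝ (fun _ : Fin n => ℝ) E}
    (h : M (fun _ => 1) = N (fun _ => 1)) : M = N := by
  ext
  exact h

/-- Jet-matching property: if two `C^m` curves `f, g : ℝ → ℝ^d` have the same iterated
derivatives at `0` up to order `m`, and `Φ : ℝ^d → ℝ` is `C^m`, then the compositions
`Φ ∘ f` and `Φ ∘ g` have the same iterated derivatives at `0` up to order `m`. -/
theorem jet_matching_composition
    (m d : ℕ)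
    (f g : ℝ → (Fin d → ℝ))
    (hf : ContDiff ℝ m f) (hg : ContDiff ℝ m g)
    (hfg : ∀ i ≤ m, iteratedDeriv i f 0 = iteratedDeriv i g 0)
    (Φ : (Fin d → ℝ) → ℝ)
    (hΦ : ContDiff ℝ m Φ) :
    ∀ i ≤ m, iteratedDeriv i (Φ ∘ f) 0 = iteratedDeriv i (Φ ∘ g) 0 := by
  intro i hi
  -- the iterated Fréchet derivatives of f and g agree at 0 up to order m
  have hFD : ∀ n ≤ m, iteratedFDeriv ℝ n f 0 = iteratedFDeriv ℝ n g 0 := by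
    intro n hn
    apply multilinear_eq_of_apply_one
    have := hfg n hn
    rwa [iteratedDeriv_eq_iteratedFDeriv, iteratedDeriv_eq_iteratedFDeriv] at this
  have hf0 : f 0 = g 0 := by simpa using hfg 0 (Nat.zero_le _)
  -- Taylor series
  have hfT : HasFTaylorSeriesUpTo (m : ℕ∞) f (ftaylorSeries ℝ f) :=
    contDiff_iff_ftaylorSeries.1 (by exact_mod_cast hf)
  have hgT : HasFTaylorSeriesUpTo (m : ℕ∞) g (ftaylorSeries ℝ g) :=
    contDiff_iff_ftaylorSeries.1 (by exact_mod_cast hg)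
  have hΦT : HasFTaylorSeriesUpTo (m : ℕ∞) Φ (ftaylorSeries ℝ Φ) :=
    contDiff_iff_ftaylorSeries.1 (by exact_mod_cast hΦ)
  rw [← hasFTaylorSeriesUpToOn_univ_iff] at hfT hgT hΦT
  have hcf := hΦT.comp hfT (mapsTo_univ f univ)
  have hcg := hΦT.comp hgT (mapsTo_univ g univ)
  rw [hasFTaylorSeriesUpToOn_univ_iff] at hcf hcg
  have him : ((i : ℕ∞) : WithTop ℕ∞) ≤ ((m : ℕ∞) : WithTop ℕ∞) := by exact_mod_cast hi
  have keyf := hcf.eq_iteratedFDeriv him 0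
  have keyg := hcg.eq_iteratedFDeriv him 0
  rw [iteratedDeriv_eq_iteratedFDeriv, iteratedDeriv_eq_iteratedFDeriv,
    ← keyf, ← keyg]
  congr 1
  rw [hf0]
  unfold FormalMultilinearSeries.taylorComp
  apply Finset.sum_congr rfl
  intro c _
  unfold FormalMultilinearSeries.compAlongOrderedFinpartition
  congr 1
  funext j
  show iteratedFDeriv ℝ (c.partSize j) f 0 = iteratedFDeriv ℝ (c.partSize j) g 0
  exact hFD _ (le_trans (c.partSize_le j) hi)
end
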